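/- Let S be a nonnegative discrete-time martingale and x > 0. Suppose that a.s. Σ_{k=0}^∞ P(S_k < x or S_k > S_{k+1} | F_k) = ∞. Then for each k ∈ ℕ, lim_{n→∞} E[S_∞ · 1_{{x ≤ S_k ≤ S_{k+1} ≤ ⋯ ≤ S_n}}] = 0; in other words, the event {x ≤ S_k ≤ S_{k+1} ≤ ⋯} (all inequalities for all indices ≥ k) is a null set. -/

import Mathlib

open MeasureTheory Filter Set

noncomputable section

variable {Ω : Type*}

/-- Evaluation of a discrete-time process at a possibly infinite random time `τ`,
using the limit variable `Sinf` on the event `{τ = ∞}`. -/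
def evalAt (S : ℕ → Ω → ℝ) (Sinf : Ω → ℝ) (τ : Ω → ℕ∞) (ω : Ω) : ℝ :=
  if τ ω = ⊤ then Sinf ω else S (τ ω).toNat ω

/-- The `k`-th drawdown time of `S`: `τ₀ = 0` and
`τ_k = inf {j > τ_{k-1} : S_j < S_{j-1}}` (with value `∞` if no such `j` exists). -/
def drawdown (S : ℕ → Ω → ℝ) : ℕ → Ω → ℕ∞
  | 0 => fun _ => 0
  | (k + 1) => fun ω =>
      sInf {j : ℕ∞ | drawdown S k ω < j ∧ ∃ n : ℕ, j = (n : ℕ∞) ∧ S n ω < S (n - 1) ω}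

/-- The first drawdown of `S` after the deterministic time `k`:
`τ̃_k = inf {j > k : S_j < S_{j-1}}`. -/
def drawdownAfter (S : ℕ → Ω → ℝ) (k : ℕ) (ω : Ω) : ℕ∞ :=
  sInf {j : ℕ∞ | (k : ℕ∞) < j ∧ ∃ n : ℕ, j = (n : ℕ∞) ∧ S n ω < S (n - 1) ω}

/-- The process stopped at a possibly infinite random time. -/
def stoppedAt (S : ℕ → Ω → ℝ) (τ : Ω → ℕ∞) (n : ℕ) (ω : Ω) : ℝ :=
  S ((min (n : ℕ∞) (τ ω)).toNat) ω

/-- The event `{S_k ≤ S_{k+1} ≤ ⋯ ≤ S_n}`. -/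
def monoEvent (S : ℕ → Ω → ℝ) (k n : ℕ) : Set Ω :=
  {ω | ∀ j, k ≤ j → j < n → S j ω ≤ S (j + 1) ω}

/-- `S` is a bubble under `P`: it loses mass at its `k`-th drawdown time for some `k ≥ 1`. -/
def IsBubble [MeasurableSpace Ω] (S : ℕ → Ω → ℝ) (Sinf : Ω → ℝ) (P : Measure Ω) : Prop :=
  ∃ k : ℕ, ∫ ω, evalAt S Sinf (drawdown S (k + 1)) ω ∂P < ∫ ω, S 0 ω ∂P

end

/-!
By Lévy's conditional Borel–Cantelli lemma, the divergence hypothesis means that almost surely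
`S_j < x` or `S_{j+1} < S_j` happens for infinitely many `j`. On `{x ≤ S_k ≤ S_{k+1} ≤ ⋯}`
neither happens for any `j ≥ k`, so this event is null. Since a nonnegative martingale is bounded
in `L¹`, Fatou's lemma makes `S_∞` integrable, and the integrals of `S_∞` over the decreasing
events `{x ≤ S_k ≤ ⋯ ≤ S_n}` tend to its integral over their null intersection.
-/

open ProbabilityTheory

section ConditionalBorelCantelli

variable {Ω : Type*} {m0 : MeasurableSpace Ω} {μ : Measure Ω} {ℱ : Filtration ℕ m0}

theorem ae_frequently_mem_of_tendsto_sum_condExp [IsFiniteMeasure μ] {t : ℕ → Set Ω}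
    (ht : ∀ n, MeasurableSet[ℱ (n + 1)] (t n))
    (hdiv : ∀ᵐ ω ∂μ, Tendsto (fun n => ∑ k ∈ Finset.range n,
      (μ[(t k).indicator (1 : Ω → ℝ) | ℱ k]) ω) atTop atTop) :
    ∀ᵐ ω ∂μ, ∃ᶠ n in atTop, ω ∈ t n := by
  -- `ae_mem_limsup_atTop_iff` conditions `s (k + 1)` on `ℱ k`; pad with `s 0 = ∅`.
  let s : ℕ → Set Ω := fun n => Nat.casesOn n ∅ t
  have hs : ∀ n, MeasurableSet[ℱ n] (s n)
    | 0 => @MeasurableSet.empty _ (ℱ 0)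
    | n + 1 => ht n
  have hshift : limsup t atTop = limsup s atTop := limsup_nat_add s 1
  filter_upwards [ae_mem_limsup_atTop_iff μ hs, hdiv] with ω hlimsup hω
  rw [← mem_limsup_iff_frequently_mem, hshift]
  exact hlimsup.2 hω

end ConditionalBorelCantelli

namespace MeasureTheory.Martingale

variable {Ω : Type*} {m0 : MeasurableSpace Ω} {μ : Measure Ω} {ℱ : Filtration ℕ m0}
  {S : ℕ → Ω → ℝ}

theorem integral_eq_integral_zero [SigmaFiniteFiltration μ ℱ]
    (hmart : Martingale S ℱ μ) (n : ℕ) : ∫ ω, S n ω ∂μ = ∫ ω, S 0 ω ∂μ := by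
  simpa only [setIntegral_univ] using
    (hmart.setIntegral_eq (Nat.zero_le n) (@MeasurableSet.univ _ (ℱ 0))).symm

theorem eLpNorm_one_eq_of_nonneg [SigmaFiniteFiltration μ ℱ]
    (hmart : Martingale S ℱ μ) (hnn : ∀ n, 0 ≤ᵐ[μ] S n) (n : ℕ) :
    eLpNorm (S n) 1 μ = ENNReal.ofReal (∫ ω, S 0 ω ∂μ) := by
  rw [eLpNorm_one_eq_lintegral_enorm,
    ← ofReal_integral_norm_eq_lintegral_enorm (hmart.integrable n),
    ← hmart.integral_eq_integral_zero n]
  congr 1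
  refine integral_congr_ae ?_
  filter_upwards [hnn n] with ω hω using Real.norm_of_nonneg hω

theorem integrable_of_tendsto_of_nonneg [SigmaFiniteFiltration μ ℱ]
    (hmart : Martingale S ℱ μ) (hnn : ∀ n, 0 ≤ᵐ[μ] S n) {Sinf : Ω → ℝ}
    (hconv : ∀ᵐ ω ∂μ, Tendsto (fun n => S n ω) atTop (nhds (Sinf ω))) :
    Integrable Sinf μ := by
  have hmeas : ∀ n, AEStronglyMeasurable (S n) μ := fun n => (hmart.integrable n).1
  rw [← memLp_one_iff_integrable]
  refine ⟨aestronglyMeasurable_of_tendsto_ae atTop hmeas hconv, ?_⟩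
  have hbound := Lp.eLpNorm_le_of_ae_tendsto
    (.of_forall fun n => (hmart.eLpNorm_one_eq_of_nonneg hnn n).le) hmeas hconv
  exact hbound.trans_lt ENNReal.ofReal_lt_top

end MeasureTheory.Martingale

theorem tendsto_integral_mul_indicator_of_antitone {Ω : Type*} {m0 : MeasurableSpace Ω}
    {μ : Measure Ω} {f : Ω → ℝ} (hf : Integrable f μ) {s : ℕ → Set Ω}
    (hs : ∀ n, MeasurableSet (s n)) (h_anti : Antitone s) (hnull : μ (⋂ n, s n) = 0) :
    Tendsto (fun n => ∫ ω, f ω * (s n).indicator (fun _ => (1 : ℝ)) ω ∂μ) atTop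
      (nhds 0) := by
  have hlim := tendsto_setIntegral_of_antitone hs h_anti ⟨0, hf.integrableOn⟩
  rw [setIntegral_measure_zero _ hnull] at hlim
  refine hlim.congr fun n => ?_
  rw [← integral_indicator (hs n)]
  congr 1 with ω
  by_cases hω : ω ∈ s n <;> simp [hω]

section MonoEvent

variable {Ω : Type*} {S : ℕ → Ω → ℝ} {k : ℕ} {ω : Ω}

theorem monoEvent_antitone (S : ℕ → Ω → ℝ) (k : ℕ) : Antitone (monoEvent S k) :=
  fun _ _ hnm _ hω j hkj hjn => hω j hkj (hjn.trans_le hnm)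

theorem measurableSet_monoEvent [MeasurableSpace Ω] (hS : ∀ n, Measurable (S n)) (k n : ℕ) :
    MeasurableSet (monoEvent S k n) := by
  simp only [monoEvent, ofPred_forall]
  exact .iInter fun j => .iInter fun _ => .iInter fun _ => measurableSet_le (hS j) (hS (j + 1))

theorem le_succ_of_mem_iInter_monoEvent (hω : ω ∈ ⋂ n, monoEvent S k n) {j : ℕ}
    (hj : k ≤ j) :
    S j ω ≤ S (j + 1) ω :=
  mem_iInter.1 hω (j + 1) j hj j.lt_succ_self

theorem le_of_mem_iInter_monoEvent (hω : ω ∈ ⋂ n, monoEvent S k n) {j : ℕ} (hj : k ≤ j) :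
    S k ω ≤ S j ω := by
  induction j, hj using Nat.le_induction with
  | base => rfl
  | succ j hkj ih => exact ih.trans (le_succ_of_mem_iInter_monoEvent hω hkj)

end MonoEvent

theorem conditional_borel_cantelli_monotone_event_general
    {Ω : Type*} {m0 : MeasurableSpace Ω} {P : Measure Ω} [IsProbabilityMeasure P]
    {ℱ : Filtration ℕ m0} {S : ℕ → Ω → ℝ} (hmart : Martingale S ℱ P)
    (hnn : ∀ n ω, 0 ≤ S n ω) {Sinf : Ω → ℝ}
    (hconv : ∀ᵐ ω ∂P, Tendsto (fun n => S n ω) atTop (nhds (Sinf ω)))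
    {x : ℝ}
    (hdiv : ∀ᵐ ω ∂P,
      Tendsto
        (fun n => ∑ k ∈ Finset.range n,
          (P[({ω' | S k ω' < x} ∪ {ω' | S (k + 1) ω' < S k ω'}).indicator
              (fun _ => (1 : ℝ)) | ℱ k]) ω)
        atTop atTop) :
    ∀ k : ℕ,
      P ({ω | x ≤ S k ω} ∩ ⋂ n, monoEvent S k n) = 0 ∧
      Tendsto
        (fun n => ∫ ω, Sinf ω *
          ({ω' | x ≤ S k ω'} ∩ monoEvent S k n).indicator (fun _ => (1 : ℝ)) ω ∂P)
        atTop (nhds 0) := by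
  intro k
  have hadapt : ∀ i j, i ≤ j → Measurable[ℱ j] (S i) := fun i j hij =>
    (hmart.stronglyAdapted i).measurable.mono (ℱ.mono hij) le_rfl
  have hS : ∀ n, Measurable (S n) := fun n => (hadapt n n le_rfl).mono (ℱ.le n) le_rfl
  have hfreq := ae_frequently_mem_of_tendsto_sum_condExp (fun j =>
    (measurableSet_lt (hadapt j (j + 1) j.le_succ) measurable_const).union
      (measurableSet_lt (hadapt (j + 1) (j + 1) le_rfl) (hadapt j (j + 1) j.le_succ))) hdiv
  have hnull : P ({ω | x ≤ S k ω} ∩ ⋂ n, monoEvent S k n) = 0 := by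
    refine measure_mono_null (fun ω ⟨hxk, hmono⟩ => ?_) (ae_iff.1 hfreq)
    intro hfr
    obtain ⟨j, hkj, hbelow | hdrop⟩ := frequently_atTop.1 hfr k
    · exact (hxk.trans (le_of_mem_iInter_monoEvent hmono hkj)).not_gt hbelow
    · exact (le_succ_of_mem_iInter_monoEvent hmono hkj).not_gt hdrop
  refine ⟨hnull, ?_⟩
  have hB : ∀ n, MeasurableSet ({ω | x ≤ S k ω} ∩ monoEvent S k n) := fun n =>
    (measurableSet_le measurable_const (hS k)).inter (measurableSet_monoEvent hS k n)
  have hint := hmart.integrable_of_tendsto_of_nonneg (fun n => .of_forall (hnn n)) hconv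
  refine tendsto_integral_mul_indicator_of_antitone hint hB
    (antitone_const.inter (monoEvent_antitone S k)) ?_
  rwa [← inter_iInter]

/-- If a.s. `Σ_k P(S_k < x or S_k > S_{k+1} | ℱ_k) = ∞`, then for each `k`
the event `{x ≤ S_k ≤ S_{k+1} ≤ ⋯}` is null and
`lim_n E[S_∞ 1_{{x ≤ S_k ≤ ⋯ ≤ S_n}}] = 0`. -/
theorem conditional_borel_cantelli_monotone_event
    {Ω : Type*} {m0 : MeasurableSpace Ω} {P : Measure Ω} [IsProbabilityMeasure P]
    {ℱ : Filtration ℕ m0} {S : ℕ → Ω → ℝ} (hmart : Martingale S ℱ P)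
    (hnn : ∀ n ω, 0 ≤ S n ω) {Sinf : Ω → ℝ}
    (hconv : ∀ᵐ ω ∂P, Tendsto (fun n => S n ω) atTop (nhds (Sinf ω)))
    {x : ℝ} (hx : 0 < x)
    (hdiv : ∀ᵐ ω ∂P,
      Tendsto
        (fun n => ∑ k ∈ Finset.range n,
          (P[({ω' | S k ω' < x} ∪ {ω' | S (k + 1) ω' < S k ω'}).indicator
              (fun _ => (1 : ℝ)) | ℱ k]) ω)
        atTop atTop) :
    ∀ k : ℕ,
      P ({ω | x ≤ S k ω} ∩ ⋂ n, monoEvent S k n) = 0 ∧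
      Tendsto
        (fun n => ∫ ω, Sinf ω *
          ({ω' | x ≤ S k ω'} ∩ monoEvent S k n).indicator (fun _ => (1 : ℝ)) ω ∂P)
        atTop (nhds 0) :=
  conditional_borel_cantelli_monotone_event_general hmart hnn hconv hdiv
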